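/- There exists a constant C > 0, depending only on d, μ and ψ, such that for every f ∈ C(Ω), every 0 < h < 1 and every x ∈ Ω, the pointwise bound |f(x) − f_min(x)| ≤ C ω_f(h) holds. (Pointwise bias estimate proved inside Theorem 3.2.) -/

import Mathlib

open MeasureTheory ProbabilityTheory Real
open scoped ENNReal

/-- The scaled kernel `ψ_h(x) = h^{-d} ψ(x/h)`. -/
noncomputable def psih {d : ℕ} (ψ : EuclideanSpace ℝ (Fin d) → ℝ) (h : ℝ)
    (x : EuclideanSpace ℝ (Fin d)) : ℝ :=
  (h ^ d)⁻¹ * ψ (h⁻¹ • x)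

/-- Modulus of continuity of `f` on `Ω`. -/
noncomputable def modulus {d : ℕ} (Ω : Set (EuclideanSpace ℝ (Fin d)))
    (f : EuclideanSpace ℝ (Fin d) → ℝ) (t : ℝ) : ℝ :=
  sSup {v : ℝ | ∃ x ∈ Ω, ∃ y ∈ Ω, dist x y ≤ t ∧ v = |f x - f y|}

/-- Sup norm of `f` over `Ω`. -/
noncomputable def supNorm {d : ℕ} (Ω : Set (EuclideanSpace ℝ (Fin d)))
    (f : EuclideanSpace ℝ (Fin d) → ℝ) : ℝ :=
  sSup {v : ℝ | ∃ x ∈ Ω, v = |f x|}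

/-- Assumption (A2): the Fourier transform of the measure `μs` is `L¹` on `ℝ^d`. -/
def FourierL1 {d : ℕ} (μs : Measure (EuclideanSpace ℝ (Fin d))) : Prop :=
  Integrable (fun ξ : EuclideanSpace ℝ (Fin d) =>
    ∫ t, Complex.exp (-(Complex.I) * ((inner ℝ t ξ : ℝ) : ℂ)) ∂μs) volume

/-!
Assumption (A2) gives `μ` a bounded density. Pairing the extension `μ*` with the Gaussian
`exp (-‖x - v‖² / r²)` through its Fourier transform bounds `∫ exp (-‖x - v‖² / r²) dμ*` by
`C r^d ‖μ̂*‖₁`, hence `μ* (B(v, r)) ≤ K vol (B(v, r))`, and Besicovitch's covering theorem upgrades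
this to `μ* ≤ K vol`.

Now `f x - f_min x` is the `ψ_h(x - ·) dμ`-average of `f x - f y`. Chaining along the segment
from `x` to `y` in steps of length `h` (here convexity of `Ω` enters) gives
`|f x - f y| ≤ (1 + ‖x - y‖ / h) ω_f(h)`, so by the density bound the numerator is at most
`K (1 + ∫ ‖z‖ ψ) ω_f(h)`. Assumption (A1) and `ψ ≥ C_ψ` on the unit ball bound the denominator
below by `C_ψ C₁ vol (B(0, 1))`, uniformly in `h ≤ 1`.
-/

open Complex Metric Module
open scoped RealInnerProductSpace NNReal

namespace MeasureTheory.Measure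

lemma le_of_measure_closedBall_le {α : Type*} [MetricSpace α] [MeasurableSpace α]
    [BorelSpace α] [SecondCountableTopology α] [HasBesicovitchCovering α] {μ ν : Measure α}
    [IsLocallyFiniteMeasure μ] [IsLocallyFiniteMeasure ν]
    (h : ∀ x, ∀ r, 0 < r → μ (closedBall x r) ≤ ν (closedBall x r)) : μ ≤ ν :=
  le_intro fun s _ _ =>
    (Besicovitch.vitaliFamily μ).measure_le_of_frequently_le ν AbsolutelyContinuous.rfl s
      fun x _ => Filter.Eventually.frequently <| by
        filter_upwards [(Besicovitch.vitaliFamily μ).eventually_filterAt_mem_setsAt x] with t ht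
        obtain ⟨r, hr, rfl⟩ : ∃ r, 0 < r ∧ closedBall x r = t := by
          simpa [Besicovitch.vitaliFamily] using ht
        exact h x r hr

end MeasureTheory.Measure

section Fourier

variable {V : Type*} [NormedAddCommGroup V] [InnerProductSpace ℝ V] [FiniteDimensional ℝ V]
  [MeasurableSpace V] [BorelSpace V]

lemma integral_cexp_neg_mul_sq_norm_sub_inner {a : ℝ} (ha : 0 < a) (w : V) :
    ∫ ξ : V, cexp (-((4 * a)⁻¹ : ℝ) * ‖ξ‖ ^ 2 + -I * ⟪w, ξ⟫)
      = (((4 * a * π) ^ ((finrank ℝ V : ℝ) / 2) * rexp (-a * ‖w‖ ^ 2) : ℝ) : ℂ) := by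
  have hb : 0 < (((4 * a)⁻¹ : ℝ) : ℂ).re := by simp only [ofReal_re]; positivity
  have ha' : (a : ℂ) ≠ 0 := ofReal_ne_zero.2 ha.ne'
  rw [GaussianFourier.integral_cexp_neg_mul_sq_norm_add hb, ofReal_mul,
    ofReal_cpow (by positivity), ofReal_exp]
  congr 1
  · push_cast
    congr 1
    field_simp
  · congr 1
    push_cast
    field_simp
    simp [I_sq]

lemma integrable_rexp_neg_mul_sq_norm {b : ℝ} (hb : 0 < b) :
    Integrable (fun ξ : V => rexp (-b * ‖ξ‖ ^ 2)) := by
  have hb' : 0 < ((b : ℝ) : ℂ).re := by simpa using hb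
  simpa [Complex.norm_exp, ← ofReal_pow] using
    (GaussianFourier.integrable_cexp_neg_mul_sq_norm_add hb' 0 (0 : V)).norm

lemma rpow_mul_integral_gaussian_eq (ν : Measure V) [IsFiniteMeasure ν] {a : ℝ} (ha : 0 < a)
    (v : V) :
    (((4 * a * π) ^ ((finrank ℝ V : ℝ) / 2) * ∫ x, rexp (-a * ‖x - v‖ ^ 2) ∂ν : ℝ) : ℂ) =
      ∫ ξ : V, cexp (-((4 * a)⁻¹ : ℝ) * ‖ξ‖ ^ 2 + I * ⟪v, ξ⟫) *
        ∫ x, cexp (-I * ⟪x, ξ⟫) ∂ν := by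
  set F : V × V → ℂ := fun p => cexp (-((4 * a)⁻¹ : ℝ) * ‖p.2‖ ^ 2 + -I * ⟪p.1 - v, p.2⟫)
  have hF : Integrable F (ν.prod volume) := by
    refine Integrable.mono' ((integrable_const (1 : ℝ)).mul_prod
      (integrable_rexp_neg_mul_sq_norm (V := V) (b := (4 * a)⁻¹) (by positivity)))
      (by fun_prop) (.of_forall fun p => le_of_eq ?_)
    simp [F, Complex.norm_exp, ← ofReal_pow]
  calc _ = ∫ x, (∫ ξ, F (x, ξ)) ∂ν := by
        rw [← integral_const_mul, ← integral_complex_ofReal]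
        simp only [F, integral_cexp_neg_mul_sq_norm_sub_inner ha]
    _ = ∫ ξ, ∫ x, F (x, ξ) ∂ν := integral_integral_swap hF
    _ = _ := by
        congr 1
        ext ξ
        rw [← integral_const_mul]
        congr 1
        ext x
        simp only [F, inner_sub_left, ← Complex.exp_add]
        push_cast
        ring_nf

lemma rpow_mul_integral_gaussian_le (ν : Measure V) [IsFiniteMeasure ν]
    (hφ : Integrable fun ξ : V => ∫ x, cexp (-I * ⟪x, ξ⟫) ∂ν) {a : ℝ} (ha : 0 < a) (v : V) :
    (4 * a * π) ^ ((finrank ℝ V : ℝ) / 2) * ∫ x, rexp (-a * ‖x - v‖ ^ 2) ∂ν ≤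
      ∫ ξ : V, ‖∫ x, cexp (-I * ⟪x, ξ⟫) ∂ν‖ := by
  have hnonneg : 0 ≤ (4 * a * π) ^ ((finrank ℝ V : ℝ) / 2) * ∫ x, rexp (-a * ‖x - v‖ ^ 2) ∂ν :=
    mul_nonneg (by positivity) (integral_nonneg fun _ => (exp_pos _).le)
  rw [← Real.norm_of_nonneg hnonneg, ← Complex.norm_real, rpow_mul_integral_gaussian_eq ν ha v]
  refine norm_integral_le_of_norm_le hφ.norm (.of_forall fun ξ => ?_)
  rw [norm_mul, Complex.norm_exp]
  refine mul_le_of_le_one_left (norm_nonneg _) (Real.exp_le_one_iff.2 ?_)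
  have : 0 ≤ (4 * a)⁻¹ * ‖ξ‖ ^ 2 := by positivity
  simp only [add_re, neg_re, mul_re, ofReal_re, ofReal_im, I_re, I_im, ← ofReal_pow]
  linarith

lemma measureReal_closedBall_le_of_gaussian (ν : Measure V) [IsFiniteMeasure ν] {Φ : ℝ}
    (hΦ : ∀ a : ℝ, 0 < a → ∀ v : V,
      (4 * a * π) ^ ((finrank ℝ V : ℝ) / 2) * ∫ x, rexp (-a * ‖x - v‖ ^ 2) ∂ν ≤ Φ)
    (v : V) {r : ℝ} (hr : 0 < r) :
    ν.real (closedBall v r) ≤ rexp 1 * Φ / (4 * π) ^ ((finrank ℝ V : ℝ) / 2) * r ^ finrank ℝ V := by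
  set n := finrank ℝ V
  set a := (r ^ 2)⁻¹
  have ha : 0 < a := by positivity
  have hint : Integrable (fun x => rexp (-a * ‖x - v‖ ^ 2)) ν :=
    (integrable_const (1 : ℝ)).mono' (by fun_prop) (.of_forall fun x => by
      rw [Real.norm_of_nonneg (exp_pos _).le, Real.exp_le_one_iff]
      have : 0 ≤ a * ‖x - v‖ ^ 2 := by positivity
      linarith)
  have hball : rexp (-1) * ν.real (closedBall v r) ≤ ∫ x, rexp (-a * ‖x - v‖ ^ 2) ∂ν := by
    calc rexp (-1) * ν.real (closedBall v r) = ∫ x in closedBall v r, rexp (-1) ∂ν := by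
          rw [setIntegral_const, smul_eq_mul, mul_comm]
      _ ≤ ∫ x in closedBall v r, rexp (-a * ‖x - v‖ ^ 2) ∂ν := by
          refine setIntegral_mono_on (integrableOn_const (measure_ne_top _ _)) hint.integrableOn
            measurableSet_closedBall fun x hx => exp_le_exp.2 ?_
          rw [mem_closedBall, dist_eq_norm] at hx
          have : a * ‖x - v‖ ^ 2 ≤ a * r ^ 2 := by gcongr
          have har : a * r ^ 2 = 1 := inv_mul_cancel₀ (by positivity)
          linarith
      _ ≤ ∫ x, rexp (-a * ‖x - v‖ ^ 2) ∂ν :=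
          setIntegral_le_integral hint (.of_forall fun _ => (exp_pos _).le)
  have hscale : (4 * a * π) ^ ((n : ℝ) / 2) = (4 * π) ^ ((n : ℝ) / 2) / r ^ n := by
    have hr2 : (r ^ 2) ^ ((n : ℝ) / 2) = r ^ n := by
      rw [← Real.rpow_natCast r 2, ← Real.rpow_mul hr.le, ← Real.rpow_natCast]
      congr 1
      push_cast
      ring
    rw [show 4 * a * π = 4 * π / r ^ 2 by simp only [a]; ring,
      Real.div_rpow (by positivity) (by positivity), hr2]
  have := hball.trans ((le_div_iff₀' (by positivity)).2 (hΦ a ha v))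
  rw [hscale, div_div_eq_mul_div, ← le_div_iff₀' (exp_pos _)] at this
  refine this.trans (le_of_eq ?_)
  rw [Real.exp_neg]
  field_simp

theorem exists_le_smul_volume_of_integrable_fourier (ν : Measure V) [IsFiniteMeasure ν]
    (hφ : Integrable fun ξ : V => ∫ x, cexp (-I * ⟪x, ξ⟫) ∂ν) :
    ∃ K : ℝ≥0, ν ≤ K • volume := by
  set n := finrank ℝ V
  set c := rexp 1 * (∫ ξ : V, ‖∫ x, cexp (-I * ⟪x, ξ⟫) ∂ν‖) / (4 * π) ^ ((n : ℝ) / 2)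
  set B := volume (closedBall (0 : V) 1)
  have hB0 : B ≠ 0 := (measure_closedBall_pos volume _ one_pos).ne'
  have hBtop : B ≠ ∞ := measure_closedBall_lt_top.ne
  refine ⟨(ENNReal.ofReal c / B).toNNReal, Measure.le_of_measure_closedBall_le fun v r hr => ?_⟩
  rw [Measure.coe_nnreal_smul_apply,
    ENNReal.coe_toNNReal (ENNReal.div_ne_top ENNReal.ofReal_ne_top hB0),
    Measure.addHaar_closedBall' volume _ hr.le, mul_comm (ENNReal.ofReal _) B, ← mul_assoc,
    ENNReal.div_mul_cancel hB0 hBtop, ← ENNReal.ofReal_mul (by positivity),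
    ← ofReal_measureReal]
  exact ENNReal.ofReal_le_ofReal (measureReal_closedBall_le_of_gaussian ν
    (fun a ha v => rpow_mul_integral_gaussian_le ν hφ ha v) v hr)

end Fourier

section Modulus

variable {d : ℕ} {Ω : Set (EuclideanSpace ℝ (Fin d))} {f : EuclideanSpace ℝ (Fin d) → ℝ}

lemma abs_sub_le_modulus (hΩ : IsCompact Ω) (hf : ContinuousOn f Ω) {x y : EuclideanSpace ℝ (Fin d)}
    (hx : x ∈ Ω) (hy : y ∈ Ω) {t : ℝ} (hxy : dist x y ≤ t) : |f x - f y| ≤ modulus Ω f t := by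
  obtain ⟨C, hC⟩ := hΩ.exists_bound_of_continuousOn hf
  refine le_csSup ⟨2 * C, ?_⟩ ⟨x, hx, y, hy, hxy, rfl⟩
  rintro _ ⟨x', hx', y', hy', -, rfl⟩
  have := abs_sub (f x') (f y')
  linarith [hC x' hx', hC y' hy', Real.norm_eq_abs (f x'), Real.norm_eq_abs (f y')]

lemma modulus_nonneg (hΩ : IsCompact Ω) (hf : ContinuousOn f Ω) {x : EuclideanSpace ℝ (Fin d)}
    (hx : x ∈ Ω) {t : ℝ} (ht : 0 ≤ t) : 0 ≤ modulus Ω f t := by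
  simpa using abs_sub_le_modulus hΩ hf hx hx (by simpa using ht)

lemma abs_sub_le_nat_mul_modulus (hΩ : IsCompact Ω) (hconv : Convex ℝ Ω)
    (hf : ContinuousOn f Ω) {h : ℝ} (n : ℕ) :
    ∀ x ∈ Ω, ∀ y ∈ Ω, dist x y ≤ n * h → |f x - f y| ≤ n * modulus Ω f h := by
  induction n with
  | zero =>
    intro x _ y _ hxy
    simp [dist_le_zero.1 (by simpa using hxy)]
  | succ n ih =>
    intro x hx y hy hxy
    set z := AffineMap.lineMap x y ((n + 1 : ℝ)⁻¹)
    have hle : (n + 1 : ℝ)⁻¹ ≤ 1 := inv_le_one_of_one_le₀ (by simp)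
    have hz : z ∈ Ω := hconv.segment_subset hx hy <|
      lineMap_mem_segment ℝ x y ⟨by positivity, hle⟩
    have hxz : dist x z ≤ h := by
      rw [dist_comm, dist_lineMap_left, Real.norm_of_nonneg (by positivity),
        inv_mul_le_iff₀ (by positivity)]
      simpa [mul_comm] using hxy
    have hzy : dist z y ≤ n * h := by
      rw [dist_lineMap_right, Real.norm_of_nonneg (sub_nonneg.2 hle)]
      calc _ ≤ (1 - (n + 1 : ℝ)⁻¹) * ((n + 1) * h) :=
            mul_le_mul_of_nonneg_left (by exact_mod_cast hxy) (sub_nonneg.2 hle)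
        _ = n * h := by field_simp; ring
    calc |f x - f y| ≤ |f x - f z| + |f z - f y| := abs_sub_le _ _ _
      _ ≤ modulus Ω f h + n * modulus Ω f h :=
          add_le_add (abs_sub_le_modulus hΩ hf hx hz hxz) (ih z hz y hy hzy)
      _ = (n + 1 : ℕ) * modulus Ω f h := by push_cast; ring

lemma abs_sub_le_one_add_dist_div_mul_modulus (hΩ : IsCompact Ω) (hconv : Convex ℝ Ω)
    (hf : ContinuousOn f Ω) {x y : EuclideanSpace ℝ (Fin d)} (hx : x ∈ Ω) (hy : y ∈ Ω) {h : ℝ}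
    (hh : 0 < h) : |f x - f y| ≤ (1 + dist x y / h) * modulus Ω f h := by
  have hq : 0 ≤ dist x y / h := by positivity
  calc |f x - f y| ≤ ⌈dist x y / h⌉₊ * modulus Ω f h :=
        abs_sub_le_nat_mul_modulus hΩ hconv hf _ x hx y hy <|
          (div_le_iff₀ hh).1 (Nat.le_ceil _)
    _ ≤ (1 + dist x y / h) * modulus Ω f h := by
        gcongr
        · exact modulus_nonneg hΩ hf hx hh.le
        · linarith [Nat.ceil_lt_add_one hq]

end Modulus

section Kernel

variable {d : ℕ} {ψ : EuclideanSpace ℝ (Fin d) → ℝ} {h : ℝ}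

lemma psih_nonneg (hψ : ∀ z, 0 ≤ ψ z) (hh : 0 ≤ h) (z : EuclideanSpace ℝ (Fin d)) :
    0 ≤ psih ψ h z :=
  mul_nonneg (by positivity) (hψ _)

lemma le_psih {Cψ : ℝ} (hψlb : ∀ z : EuclideanSpace ℝ (Fin d), ‖z‖ ≤ 1 → Cψ ≤ ψ z) (hh : 0 < h)
    {z : EuclideanSpace ℝ (Fin d)} (hz : ‖z‖ ≤ h) : (h ^ d)⁻¹ * Cψ ≤ psih ψ h z := by
  refine mul_le_mul_of_nonneg_left (hψlb _ ?_) (by positivity)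
  rw [norm_smul, Real.norm_of_nonneg (by positivity)]
  exact inv_mul_le_one_of_le₀ hz hh.le

lemma integrable_psih (hψ : Integrable ψ) (hh : h ≠ 0) : Integrable (psih ψ h) :=
  (hψ.comp_smul (inv_ne_zero hh)).const_mul _

lemma integral_psih (hh : 0 < h) : ∫ z, psih ψ h z = ∫ z, ψ z := by
  simp only [psih]
  rw [integral_const_mul, Measure.integral_comp_smul, finrank_euclideanSpace_fin,
    smul_eq_mul, inv_pow, inv_inv, abs_of_pos (by positivity), inv_mul_cancel_left₀ (by positivity)]

lemma norm_mul_psih (hh : 0 < h) (z : EuclideanSpace ℝ (Fin d)) :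
    ‖z‖ * psih ψ h z = h * psih (fun z => ‖z‖ * ψ z) h z := by
  rw [psih, psih, norm_smul, Real.norm_of_nonneg (inv_pos.2 hh).le]
  field_simp

lemma integrable_norm_mul_psih (hψ : Integrable fun z : EuclideanSpace ℝ (Fin d) => ‖z‖ * ψ z)
    (hh : 0 < h) : Integrable fun z => ‖z‖ * psih ψ h z := by
  simpa only [norm_mul_psih hh] using (integrable_psih hψ hh.ne').const_mul h

lemma integral_norm_mul_psih (hh : 0 < h) :
    ∫ z, ‖z‖ * psih ψ h z = h * ∫ z, ‖z‖ * ψ z := by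
  simp only [norm_mul_psih hh, integral_const_mul, integral_psih hh]

end Kernel

lemma integral_le_mul_integral_of_le_smul {α : Type*} [MeasurableSpace α] {μ ν : Measure α}
    {K : ℝ≥0} (hle : ν ≤ K • μ) {g : α → ℝ} (hg0 : 0 ≤ g) (hg : Integrable g μ) :
    ∫ x, g x ∂ν ≤ K * ∫ x, g x ∂μ := by
  simpa [NNReal.smul_def] using integral_mono_measure hle (.of_forall hg0) hg.smul_measure_nnreal

lemma abs_sub_integral_mul_div_integral_le {α : Type*} [MeasurableSpace α] {ν : Measure α}
    {f w : α → ℝ} (hw : Integrable w ν) (hfw : Integrable (fun y => f y * w y) ν) (hw0 : 0 ≤ w)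
    (hD : ∫ y, w y ∂ν ≠ 0) (c : ℝ) :
    |c - (∫ y, f y * w y ∂ν) / ∫ y, w y ∂ν| ≤ (∫ y, |c - f y| * w y ∂ν) / ∫ y, w y ∂ν := by
  have hD0 : 0 < ∫ y, w y ∂ν := (integral_nonneg hw0).lt_of_ne' hD
  have hsub : c - (∫ y, f y * w y ∂ν) / ∫ y, w y ∂ν = (∫ y, (c - f y) * w y ∂ν) / ∫ y, w y ∂ν := by
    rw [eq_div_iff hD, sub_mul, div_mul_cancel₀ _ hD, ← integral_const_mul,
      ← integral_sub (hw.const_mul c) hfw]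
    simp only [sub_mul]
  rw [hsub, abs_div, abs_of_pos hD0]
  gcongr
  refine abs_integral_le_integral_abs.trans_eq ?_
  simp only [abs_mul, abs_of_nonneg (hw0 _)]

section KernelSmoothing

variable {d : ℕ} {Ω : Set (EuclideanSpace ℝ (Fin d))} {μ : Measure (EuclideanSpace ℝ (Fin d))}
  {ψ : EuclideanSpace ℝ (Fin d) → ℝ} {f : EuclideanSpace ℝ (Fin d) → ℝ}
  {x : EuclideanSpace ℝ (Fin d)} {h : ℝ}

/-- The estimator `f_min` of the paper. -/
noncomputable def kernelSmoothing (μ : Measure (EuclideanSpace ℝ (Fin d)))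
    (Ω : Set (EuclideanSpace ℝ (Fin d))) (ψ : EuclideanSpace ℝ (Fin d) → ℝ) (h : ℝ)
    (f : EuclideanSpace ℝ (Fin d) → ℝ) (x : EuclideanSpace ℝ (Fin d)) : ℝ :=
  (∫ y in Ω, f y * psih ψ h (x - y) ∂μ) / ∫ t in Ω, psih ψ h (x - t) ∂μ

lemma mul_volume_closedBall_le_setIntegral_psih [IsFiniteMeasure μ] (hΩ : MeasurableSet Ω)
    (hψ0 : ∀ z, 0 ≤ ψ z) {Cψ : ℝ} (hCψ : 0 ≤ Cψ)
    (hψlb : ∀ z : EuclideanSpace ℝ (Fin d), ‖z‖ ≤ 1 → Cψ ≤ ψ z) (hh : 0 < h)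
    (hint : IntegrableOn (fun t => psih ψ h (x - t)) Ω μ) {C₁ : ℝ} (hC₁ : 0 ≤ C₁)
    (hA1 : ENNReal.ofReal C₁ * volume (closedBall x h) ≤ μ (Ω ∩ closedBall x h)) :
    Cψ * C₁ * volume.real (closedBall (0 : EuclideanSpace ℝ (Fin d)) 1) ≤
      ∫ t in Ω, psih ψ h (x - t) ∂μ := by
  have hball : C₁ * volume.real (closedBall x h) ≤ μ.real (Ω ∩ closedBall x h) := by
    simpa [ENNReal.toReal_mul, ENNReal.toReal_ofReal hC₁, measureReal_def] using
      ENNReal.toReal_mono (measure_ne_top _ _) hA1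
  calc Cψ * C₁ * volume.real (closedBall (0 : EuclideanSpace ℝ (Fin d)) 1)
      = (h ^ d)⁻¹ * Cψ * (C₁ * volume.real (closedBall x h)) := by
        rw [Measure.addHaar_real_closedBall' _ _ hh.le, finrank_euclideanSpace_fin]
        field_simp
    _ ≤ (h ^ d)⁻¹ * Cψ * μ.real (Ω ∩ closedBall x h) := by gcongr
    _ = ∫ t in Ω ∩ closedBall x h, (h ^ d)⁻¹ * Cψ ∂μ := by
        rw [setIntegral_const, smul_eq_mul, mul_comm]
    _ ≤ ∫ t in Ω ∩ closedBall x h, psih ψ h (x - t) ∂μ := by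
        refine setIntegral_mono_on (integrableOn_const (measure_ne_top _ _))
          (hint.mono_set Set.inter_subset_left) (hΩ.inter measurableSet_closedBall)
          fun t ht => le_psih hψlb hh ?_
        rw [← dist_eq_norm, dist_comm]
        exact ht.2
    _ ≤ ∫ t in Ω, psih ψ h (x - t) ∂μ :=
        setIntegral_mono_set hint (.of_forall fun t => psih_nonneg hψ0 hh.le _)
          Set.inter_subset_left.eventuallyLE

lemma integrable_one_add_norm_div_mul_psih (hψ : Integrable ψ)
    (hψmom : Integrable fun z : EuclideanSpace ℝ (Fin d) => ‖z‖ * ψ z) (hh : 0 < h) :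
    Integrable fun z => (1 + ‖z‖ / h) * psih ψ h z := by
  refine ((integrable_psih hψ hh.ne').add ((integrable_norm_mul_psih hψmom hh).div_const h)).congr
    (.of_forall fun z => ?_)
  simp only [Pi.add_apply]
  ring

lemma integral_one_add_norm_div_mul_psih (hψ : Integrable ψ)
    (hψmom : Integrable fun z : EuclideanSpace ℝ (Fin d) => ‖z‖ * ψ z) (hh : 0 < h) :
    ∫ z, (1 + ‖z‖ / h) * psih ψ h z = (∫ z, ψ z) + ∫ z, ‖z‖ * ψ z := by
  simp only [add_mul, one_mul, div_mul_eq_mul_div]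
  rw [integral_add (integrable_psih hψ hh.ne') ((integrable_norm_mul_psih hψmom hh).div_const h),
    integral_div, integral_psih hh, integral_norm_mul_psih hh, mul_div_cancel_left₀ _ hh.ne']

lemma setIntegral_abs_sub_mul_psih_le (hΩ : IsCompact Ω) (hconv : Convex ℝ Ω)
    (hf : ContinuousOn f Ω) (hx : x ∈ Ω) (hψ0 : ∀ z, 0 ≤ ψ z) (hψ : Integrable ψ)
    (hψmom : Integrable fun z : EuclideanSpace ℝ (Fin d) => ‖z‖ * ψ z) {K : ℝ≥0}
    (hdom : μ.restrict Ω ≤ K • volume) (hh : 0 < h) :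
    ∫ y in Ω, |f x - f y| * psih ψ h (x - y) ∂μ ≤
      K * ((∫ z, ψ z) + ∫ z, ‖z‖ * ψ z) * modulus Ω f h := by
  set G := fun z => (1 + ‖z‖ / h) * psih ψ h z
  have hG : Integrable fun y => G (x - y) :=
    (integrable_one_add_norm_div_mul_psih hψ hψmom hh).comp_sub_left x
  have hω := modulus_nonneg hΩ hf hx hh.le
  calc ∫ y in Ω, |f x - f y| * psih ψ h (x - y) ∂μ
      ≤ ∫ y in Ω, modulus Ω f h * G (x - y) ∂μ := by
        refine integral_mono_of_nonneg
          (.of_forall fun y => mul_nonneg (abs_nonneg _) (psih_nonneg hψ0 hh.le _))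
          ((hG.smul_measure_nnreal.mono_measure hdom).const_mul _)
          (ae_restrict_of_forall_mem hΩ.measurableSet fun y hy => ?_)
        have := abs_sub_le_one_add_dist_div_mul_modulus hΩ hconv hf hx hy hh
        rw [dist_eq_norm] at this
        calc |f x - f y| * psih ψ h (x - y)
            ≤ (1 + ‖x - y‖ / h) * modulus Ω f h * psih ψ h (x - y) :=
              mul_le_mul_of_nonneg_right this (psih_nonneg hψ0 hh.le _)
          _ = modulus Ω f h * G (x - y) := by ring
    _ ≤ modulus Ω f h * (K * ∫ y, G (x - y)) := by
        rw [integral_const_mul]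
        gcongr
        exact integral_le_mul_integral_of_le_smul hdom
          (fun y => mul_nonneg (by positivity) (psih_nonneg hψ0 hh.le _)) hG
    _ = K * ((∫ z, ψ z) + ∫ z, ‖z‖ * ψ z) * modulus Ω f h := by
        rw [integral_sub_left_eq_self G volume x,
          integral_one_add_norm_div_mul_psih hψ hψmom hh]
        ring

theorem abs_sub_kernelSmoothing_le [IsFiniteMeasure μ] (hΩ : IsCompact Ω) (hconv : Convex ℝ Ω)
    (hf : ContinuousOn f Ω) (hx : x ∈ Ω) (hψ0 : ∀ z, 0 ≤ ψ z) (hψint : ∫ z, ψ z = 1)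
    (hψmom : Integrable fun z : EuclideanSpace ℝ (Fin d) => ‖z‖ * ψ z) {Cψ : ℝ} (hCψ : 0 < Cψ)
    (hψlb : ∀ z : EuclideanSpace ℝ (Fin d), ‖z‖ ≤ 1 → Cψ ≤ ψ z) {C₁ : ℝ} (hC₁ : 0 < C₁)
    (hA1 : ENNReal.ofReal C₁ * volume (closedBall x h) ≤ μ (Ω ∩ closedBall x h)) {K : ℝ≥0}
    (hdom : μ.restrict Ω ≤ K • volume) (hh : 0 < h) :
    |f x - kernelSmoothing μ Ω ψ h f x| ≤
      K * (1 + ∫ z, ‖z‖ * ψ z) /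
        (Cψ * C₁ * volume.real (closedBall (0 : EuclideanSpace ℝ (Fin d)) 1)) * modulus Ω f h := by
  have hψ : Integrable ψ := .of_integral_ne_zero (by simp [hψint])
  have hB : 0 < volume.real (closedBall (0 : EuclideanSpace ℝ (Fin d)) 1) :=
    ENNReal.toReal_pos (measure_closedBall_pos volume _ one_pos).ne' measure_closedBall_lt_top.ne
  have hc₀ : 0 < Cψ * C₁ * volume.real (closedBall (0 : EuclideanSpace ℝ (Fin d)) 1) := by
    positivity
  have hw : Integrable (fun y => psih ψ h (x - y)) (μ.restrict Ω) :=
    ((integrable_psih hψ hh.ne').comp_sub_left x).smul_measure_nnreal.mono_measure hdom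
  have hD := mul_volume_closedBall_le_setIntegral_psih hΩ.measurableSet hψ0 hCψ.le hψlb hh hw
    hC₁.le hA1
  obtain ⟨C, hC⟩ := hΩ.exists_bound_of_continuousOn hf
  have hfw : Integrable (fun y => f y * psih ψ h (x - y)) (μ.restrict Ω) :=
    hw.bdd_mul (hf.aestronglyMeasurable hΩ.measurableSet)
      (ae_restrict_of_forall_mem hΩ.measurableSet hC)
  calc |f x - kernelSmoothing μ Ω ψ h f x|
      ≤ (∫ y in Ω, |f x - f y| * psih ψ h (x - y) ∂μ) / ∫ t in Ω, psih ψ h (x - t) ∂μ :=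
        abs_sub_integral_mul_div_integral_le hw hfw (fun y => psih_nonneg hψ0 hh.le _)
          (hc₀.trans_le hD).ne' (f x)
    _ ≤ K * (1 + ∫ z, ‖z‖ * ψ z) * modulus Ω f h /
          (Cψ * C₁ * volume.real (closedBall (0 : EuclideanSpace ℝ (Fin d)) 1)) := by
        refine div_le_div₀ ?_ ?_ hc₀ hD
        · have hω := modulus_nonneg hΩ hf hx hh.le
          have hM : 0 ≤ ∫ z, ‖z‖ * ψ z := integral_nonneg fun z => mul_nonneg (norm_nonneg z) (hψ0 z)
          positivity
        · simpa only [hψint] using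
            setIntegral_abs_sub_mul_psih_le hΩ hconv hf hx hψ0 hψ hψmom hdom hh
    _ = _ := by ring

end KernelSmoothing

theorem stmt_4_general
    (d : ℕ)
    (Ω : Set (EuclideanSpace ℝ (Fin d)))
    (hΩcpt : IsCompact Ω) (hΩconv : Convex ℝ Ω)
    (μ : Measure (EuclideanSpace ℝ (Fin d))) [IsProbabilityMeasure μ]
    (C₁ : ℝ) (hC₁ : 0 < C₁)
    (hA1 : ∀ x ∈ Ω, ∀ α : ℝ, 0 < α → α ≤ 1 →
      ENNReal.ofReal C₁ * volume (Metric.closedBall x α) ≤ μ (Ω ∩ Metric.closedBall x α))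
    (hA2 : ∃ μs : Measure (EuclideanSpace ℝ (Fin d)),
      IsFiniteMeasure μs ∧ μs.restrict Ω = μ ∧ FourierL1 μs)
    (ψ : EuclideanSpace ℝ (Fin d) → ℝ)
    (hψpos : ∀ x, 0 ≤ ψ x)
    (hψint : ∫ x, ψ x = 1)
    (hψmom : Integrable (fun x : EuclideanSpace ℝ (Fin d) => ‖x‖ * ψ x) volume)
    (Cψ : ℝ) (hCψ : 0 < Cψ)
    (hψlb : ∀ x : EuclideanSpace ℝ (Fin d), ‖x‖ ≤ 1 → Cψ ≤ ψ x) :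
    ∃ C > 0, ∀ f : EuclideanSpace ℝ (Fin d) → ℝ, ContinuousOn f Ω →
      ∀ h : ℝ, 0 < h → h < 1 → ∀ x ∈ Ω,
        |f x - (∫ y in Ω, f y * psih ψ h (x - y) ∂μ) /
            (∫ t in Ω, psih ψ h (x - t) ∂μ)| ≤ C * modulus Ω f h := by
  obtain ⟨μs, _, hμs, hφ⟩ := hA2
  obtain ⟨K, hK⟩ := exists_le_smul_volume_of_integrable_fourier μs hφ
  have hdom : μ.restrict Ω ≤ K • volume :=
    calc μ.restrict Ω ≤ μ := Measure.restrict_le_self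
      _ = μs.restrict Ω := hμs.symm
      _ ≤ μs := Measure.restrict_le_self
      _ ≤ K • volume := hK
  set C := K * (1 + ∫ z, ‖z‖ * ψ z) /
    (Cψ * C₁ * volume.real (closedBall (0 : EuclideanSpace ℝ (Fin d)) 1))
  have hC : 0 ≤ C := by
    have hM : 0 ≤ ∫ z, ‖z‖ * ψ z := integral_nonneg fun z => mul_nonneg (norm_nonneg z) (hψpos z)
    positivity
  refine ⟨C + 1, by positivity, fun f hf h hh0 hh1 x hx => ?_⟩
  calc |f x - kernelSmoothing μ Ω ψ h f x| ≤ C * modulus Ω f h :=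
        abs_sub_kernelSmoothing_le hΩcpt hΩconv hf hx hψpos hψint hψmom hCψ hψlb hC₁
          (hA1 x hx h hh0 hh1.le) hdom hh0
    _ ≤ (C + 1) * modulus Ω f h :=
        mul_le_mul_of_nonneg_right (le_add_of_nonneg_right zero_le_one)
          (modulus_nonneg hΩcpt hf hx hh0.le)

/-- pointwise bias estimate in the proof of Theorem 3.2: there is `C > 0`
depending only on `d, μ, ψ` such that for every continuous `f`, every `0 < h < 1` and
every `x ∈ Ω`, `|f(x) − f_min(x)| ≤ C ω_f(h)`. -/
theorem stmt_4
    (d : ℕ) (hd : 1 ≤ d)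
    (Ω : Set (EuclideanSpace ℝ (Fin d)))
    (hΩcpt : IsCompact Ω) (hΩconv : Convex ℝ Ω) (hΩint : (interior Ω).Nonempty)
    (μ : Measure (EuclideanSpace ℝ (Fin d))) [IsProbabilityMeasure μ]
    (hμΩ : μ Ωᶜ = 0)
    (C₁ : ℝ) (hC₁ : 0 < C₁)
    (hA1 : ∀ x ∈ Ω, ∀ α : ℝ, 0 < α → α ≤ 1 →
      ENNReal.ofReal C₁ * volume (Metric.closedBall x α) ≤ μ (Ω ∩ Metric.closedBall x α))
    (hA2 : ∃ μs : Measure (EuclideanSpace ℝ (Fin d)),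
      IsFiniteMeasure μs ∧ μs.restrict Ω = μ ∧ FourierL1 μs)
    (ψ : EuclideanSpace ℝ (Fin d) → ℝ)
    (hψcont : Continuous ψ) (hψbdd : ∃ M, ∀ x, ψ x ≤ M) (hψpos : ∀ x, 0 ≤ ψ x)
    (hψint : ∫ x, ψ x = 1)
    (hψmom : Integrable (fun x : EuclideanSpace ℝ (Fin d) => ‖x‖ * ψ x) volume)
    (Cψ : ℝ) (hCψ : 0 < Cψ)
    (hψlb : ∀ x : EuclideanSpace ℝ (Fin d), ‖x‖ ≤ 1 → Cψ ≤ ψ x) :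
    ∃ C > 0, ∀ f : EuclideanSpace ℝ (Fin d) → ℝ, ContinuousOn f Ω →
      ∀ h : ℝ, 0 < h → h < 1 → ∀ x ∈ Ω,
        |f x - (∫ y in Ω, f y * psih ψ h (x - y) ∂μ) /
            (∫ t in Ω, psih ψ h (x - t) ∂μ)| ≤ C * modulus Ω f h :=
  stmt_4_general d Ω hΩcpt hΩconv μ C₁ hC₁ hA1 hA2 ψ hψpos hψint hψmom Cψ hCψ hψlb
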